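/- If α and β are two linearly independent elements of the Lie algebra su(2), then α, β, and the Lie bracket [α,β] form a basis of su(2) as a real vector space. -/

import Mathlib

set_option maxHeartbeats 1000000

open Matrix

/-- The real Lie algebra `su(2)`: traceless skew-Hermitian `2 × 2` complex matrices,
as a real subspace of the `2 × 2` complex matrices. -/
noncomputable def su2 : Submodule ℝ (Matrix (Fin 2) (Fin 2) ℂ) where
  carrier := {A | Aᴴ = -A ∧ A.trace = 0}
  add_mem' := by
    rintro a b ⟨ha1, ha2⟩ ⟨hb1, hb2⟩
    refine ⟨?_, ?_⟩
    · rw [Matrix.conjTranspose_add, ha1, hb1, neg_add]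
    · simp [Matrix.trace_add, ha2, hb2]
  zero_mem' := by simp
  smul_mem' := by
    rintro c a ⟨h1, h2⟩
    refine ⟨?_, ?_⟩
    · simp [Matrix.conjTranspose_smul, h1]
    · simp [h2]

namespace Su2Aux

open Complex

lemma su2_rep {X : Matrix (Fin 2) (Fin 2) ℂ} (hX : X ∈ su2) :
    X = !![(X 0 0).im * I, (X 0 1).re + (X 0 1).im * I;
           -(X 0 1).re + (X 0 1).im * I, -((X 0 0).im * I)] := by
  obtain ⟨h1, h2⟩ := hX
  rw [Matrix.trace_fin_two] at h2
  have h00 : star (X 0 0) = -(X 0 0) := by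
    have := congrFun (congrFun h1 0) 0; simpa [Matrix.conjTranspose_apply] using this
  have h01 : star (X 0 1) = -(X 1 0) := by
    have := congrFun (congrFun h1 1) 0; simpa [Matrix.conjTranspose_apply] using this
  have hre : (X 0 0).re = 0 := by
    have := congrArg Complex.re h00; simp at this; linarith
  have ha : X 0 0 = (X 0 0).im * I := by
    rw [← re_add_im (X 0 0)]; simp [hre]
  have hb : X 0 1 = (X 0 1).re + (X 0 1).im * I := (re_add_im (X 0 1)).symm
  have hc : X 1 0 = -(X 0 1).re + (X 0 1).im * I := by
    have hr := congrArg Complex.re h01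
    have hi := congrArg Complex.im h01
    simp at hr hi
    rw [← re_add_im (X 1 0), ← hi]
    have : (X 1 0).re = -(X 0 1).re := by linarith
    rw [this]; push_cast; ring
  have hd : X 1 1 = -((X 0 0).im * I) := by
    have h' : X 1 1 = -(X 0 0) := by linear_combination h2
    exact h'.trans (congrArg Neg.neg ha)
  ext i j
  fin_cases i <;> fin_cases j
  · simpa using ha
  · simpa using hb
  · simpa using hc
  · simpa using hd

lemma su2_eq_zero {X : Matrix (Fin 2) (Fin 2) ℂ} (hX : X ∈ su2)
    (h1 : (X 0 0).im = 0) (h2 : (X 0 1).re = 0) (h3 : (X 0 1).im = 0) : X = 0 := by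
  rw [su2_rep hX, h1, h2, h3]
  ext i j
  fin_cases i <;> fin_cases j <;> simp

lemma trace_mul_fin2 (A B : Matrix (Fin 2) (Fin 2) ℂ) :
    (A*B).trace = A 0 0*B 0 0 + A 0 1*B 1 0 + A 1 0*B 0 1 + A 1 1*B 1 1 := by
  rw [Matrix.trace_fin_two]
  simp [Matrix.mul_apply, Fin.sum_univ_two]; ring

lemma trace_mul_su2 {X Y : Matrix (Fin 2) (Fin 2) ℂ} (hX : X ∈ su2) (hY : Y ∈ su2) :
    (X*Y).trace = (((-2:ℝ))*((X 0 0).im*(Y 0 0).im + (X 0 1).re*(Y 0 1).re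
      + (X 0 1).im*(Y 0 1).im) : ℝ) := by
  rw [trace_mul_fin2]
  rw [su2_rep hX, su2_rep hY]
  simp [Complex.ext_iff]
  constructor <;> ring

lemma mul_sub_entry00 {X Y : Matrix (Fin 2) (Fin 2) ℂ} (hX : X ∈ su2) (hY : Y ∈ su2) :
    (X*Y - Y*X) 0 0 = ((2*((X 0 1).re*(Y 0 1).im - (X 0 1).im*(Y 0 1).re) : ℝ)) * I := by
  conv_lhs => rw [su2_rep hX, su2_rep hY]
  simp [Matrix.mul_apply, Fin.sum_univ_two, Complex.ext_iff]
  constructor <;> ring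

lemma mul_sub_entry01 {X Y : Matrix (Fin 2) (Fin 2) ℂ} (hX : X ∈ su2) (hY : Y ∈ su2) :
    (X*Y - Y*X) 0 1 = ((2*((X 0 1).im*(Y 0 0).im - (X 0 0).im*(Y 0 1).im) : ℝ))
      + ((2*((X 0 0).im*(Y 0 1).re - (X 0 1).re*(Y 0 0).im) : ℝ)) * I := by
  conv_lhs => rw [su2_rep hX, su2_rep hY]
  simp [Matrix.mul_apply, Fin.sum_univ_two, Complex.ext_iff]
  constructor <;> ring

lemma lie_mem_su2 {X Y : Matrix (Fin 2) (Fin 2) ℂ} (hX : X ∈ su2) (hY : Y ∈ su2) :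
    X*Y - Y*X ∈ su2 := by
  obtain ⟨hX1, _⟩ := hX
  obtain ⟨hY1, _⟩ := hY
  refine ⟨?_, ?_⟩
  · simp [Matrix.conjTranspose_sub, Matrix.conjTranspose_mul, hX1, hY1, neg_sub]
  · simp [Matrix.trace_sub, Matrix.trace_mul_comm X Y]

end Su2Aux

open Su2Aux Complex

/-- If `α` and `β` are two linearly independent elements of `su(2)`, then
`α`, `β` and `⁅α, β⁆` form a basis of `su(2)` as a real vector space. -/
theorem stmt0 (α β : Matrix (Fin 2) (Fin 2) ℂ) (hα : α ∈ su2) (hβ : β ∈ su2)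
    (h : LinearIndependent ℝ ![α, β]) :
    LinearIndependent ℝ ![α, β, ⁅α, β⁆] ∧
      Submodule.span ℝ {α, β, ⁅α, β⁆} = su2 := by
  have hbM : ⁅α, β⁆ = α*β - β*α := Ring.lie_def α β
  set b := α*β - β*α with hbdef
  rw [hbM]
  have hb : b ∈ su2 := lie_mem_su2 hα hβ
  -- coordinates
  set a1 := (α 0 0).im with ha1
  set a2 := (α 0 1).re with ha2
  set a3 := (α 0 1).im with ha3
  set q1 := (β 0 0).im with hq1
  set q2 := (β 0 1).re with hq2
  set q3 := (β 0 1).im with hq3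
  have hb1 : (b 0 0).im = 2*(a2*q3 - a3*q2) := by
    have := congrArg Complex.im (mul_sub_entry00 hα hβ); simpa [hbdef] using this
  have hb2 : (b 0 1).re = 2*(a3*q1 - a1*q3) := by
    have := congrArg Complex.re (mul_sub_entry01 hα hβ); simpa [hbdef] using this
  have hb3 : (b 0 1).im = 2*(a1*q2 - a2*q1) := by
    have := congrArg Complex.im (mul_sub_entry01 hα hβ); simpa [hbdef] using this
  -- pair independence in usable form
  have hpair : ∀ s t : ℝ, s • α + t • β = 0 → s = 0 ∧ t = 0 := by
    intro s t hst
    have h2 := Fintype.linearIndependent_iff.mp h ![s, t] (by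
      simpa [Fin.sum_univ_two] using hst)
    exact ⟨h2 0, h2 1⟩
  have hβne : β ≠ 0 := h.ne_zero 1
  -- the bracket is nonzero
  have hbne : b ≠ 0 := by
    intro h0
    have hc1 : a2*q3 - a3*q2 = 0 := by
      have := hb1; rw [h0] at this; simp at this; linarith
    have hc2 : a3*q1 - a1*q3 = 0 := by
      have := hb2; rw [h0] at this; simp at this; linarith
    have hc3 : a1*q2 - a2*q1 = 0 := by
      have := hb3; rw [h0] at this; simp at this; linarith
    set nb := q1*q1 + q2*q2 + q3*q3 with hnb
    set ab := a1*q1 + a2*q2 + a3*q3 with hab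
    have hv : nb • α + (-ab) • β = 0 := by
      have hvm : nb • α + (-ab) • β ∈ su2 :=
        Submodule.add_mem _ (Submodule.smul_mem _ _ hα) (Submodule.smul_mem _ _ hβ)
      refine su2_eq_zero hvm ?_ ?_ ?_
      · simp [Matrix.add_apply, Matrix.smul_apply, Complex.smul_im, ← ha1, ← hq1]
        linear_combination q2 * hc3 - q3 * hc2
      · simp [Matrix.add_apply, Matrix.smul_apply, Complex.smul_re, ← ha2, ← hq2]
        linear_combination q3 * hc1 - q1 * hc3
      · simp [Matrix.add_apply, Matrix.smul_apply, Complex.smul_im, ← ha3, ← hq3]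
        linear_combination q1 * hc2 - q2 * hc1
    obtain ⟨hnb0, _⟩ := hpair _ _ hv
    have hq1' : q1 = 0 := by nlinarith [mul_self_nonneg q1, mul_self_nonneg q2, mul_self_nonneg q3]
    have hq2' : q2 = 0 := by nlinarith [mul_self_nonneg q1, mul_self_nonneg q2, mul_self_nonneg q3]
    have hq3' : q3 = 0 := by nlinarith [mul_self_nonneg q1, mul_self_nonneg q2, mul_self_nonneg q3]
    exact hβne (su2_eq_zero hβ hq1' hq2' hq3')
  -- trace pairing facts
  have htab : (α*b).trace = 0 := by
    rw [hbdef, mul_sub, Matrix.trace_sub,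
      show α*(β*α) = α*β*α from (mul_assoc α β α).symm,
      Matrix.trace_mul_comm (α*β) α, sub_self]
  have htbb2 : (β*b).trace = 0 := by
    rw [hbdef, mul_sub, Matrix.trace_sub,
      show β*(α*β) = β*α*β from (mul_assoc β α β).symm,
      Matrix.trace_mul_comm (β*α) β, sub_self]
  have hbbpos : (0:ℝ) < (b 0 0).im^2 + (b 0 1).re^2 + (b 0 1).im^2 := by
    rcases lt_or_eq_of_le (by positivity : (0:ℝ) ≤ (b 0 0).im^2 + (b 0 1).re^2 + (b 0 1).im^2)
      with hlt | heq
    · exact hlt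
    · exfalso
      apply hbne
      refine su2_eq_zero hb ?_ ?_ ?_ <;> nlinarith [sq_nonneg (b 0 0).im, sq_nonneg (b 0 1).re, sq_nonneg (b 0 1).im]
  have htbb : (b*b).trace = (((-2:ℝ))*((b 0 0).im^2 + (b 0 1).re^2 + (b 0 1).im^2) : ℝ) := by
    rw [trace_mul_su2 hb hb]; ring_nf
  -- linear independence of the triple
  have hindep : LinearIndependent ℝ ![α, β, b] := by
    rw [Fintype.linearIndependent_iff]
    intro g hg
    rw [Fin.sum_univ_three] at hg
    simp only [Matrix.cons_val_zero, Matrix.cons_val_one, Matrix.head_cons,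
      Matrix.cons_val_two, Matrix.tail_cons] at hg
    have hg2 : g 2 = 0 := by
      have htr : ((g 0 • α + g 1 • β + g 2 • b) * b).trace = 0 := by rw [hg]; simp
      rw [Matrix.add_mul, Matrix.add_mul, Matrix.smul_mul, Matrix.smul_mul, Matrix.smul_mul,
        Matrix.trace_add, Matrix.trace_add, Matrix.trace_smul, Matrix.trace_smul,
        Matrix.trace_smul, htab, htbb2, htbb] at htr
      simp only [smul_zero, zero_add, smul_eq_mul] at htr
      have : (g 2 : ℂ) * (((-2:ℝ))*((b 0 0).im^2 + (b 0 1).re^2 + (b 0 1).im^2) : ℝ) = 0 := by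
        simpa [Complex.real_smul] using htr
      have hr : g 2 * ((-2)*((b 0 0).im^2 + (b 0 1).re^2 + (b 0 1).im^2)) = 0 := by
        exact_mod_cast this
      have : ((-2:ℝ))*((b 0 0).im^2 + (b 0 1).re^2 + (b 0 1).im^2) ≠ 0 := by nlinarith
      exact (mul_eq_zero.mp hr).resolve_right this
    rw [hg2, zero_smul, add_zero] at hg
    obtain ⟨h0, h1⟩ := hpair _ _ hg
    intro i
    fin_cases i <;> assumption
  refine ⟨hindep, ?_⟩
  -- spanning
  have hE : su2 ≤ Submodule.span ℝ (Set.range ![(!![I, 0; 0, -I] : Matrix (Fin 2) (Fin 2) ℂ),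
      !![0, 1; -1, 0], !![0, I; I, 0]]) := by
    intro X hX
    have hXr : X = (X 0 0).im • (!![I, 0; 0, -I] : Matrix (Fin 2) (Fin 2) ℂ)
        + (X 0 1).re • !![0, 1; -1, 0] + (X 0 1).im • !![0, I; I, 0] := by
      conv_lhs => rw [su2_rep hX]
      ext i j
      fin_cases i <;> fin_cases j <;> simp [Complex.real_smul] <;> ring
    rw [hXr]
    refine Submodule.add_mem _ (Submodule.add_mem _ (Submodule.smul_mem _ _ ?_)
      (Submodule.smul_mem _ _ ?_)) (Submodule.smul_mem _ _ ?_)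
    · exact Submodule.subset_span ⟨0, rfl⟩
    · exact Submodule.subset_span ⟨1, rfl⟩
    · exact Submodule.subset_span ⟨2, rfl⟩
  have hsetr : ({α, β, b} : Set (Matrix (Fin 2) (Fin 2) ℂ)) = Set.range ![α, β, b] := by
    ext x
    simp [Fin.exists_fin_succ, Matrix.range_cons, Matrix.range_cons_empty]
    tauto
  have hfr3 : Module.finrank ℝ (Submodule.span ℝ ({α, β, b} : Set (Matrix (Fin 2) (Fin 2) ℂ))) = 3 := by
    rw [hsetr, finrank_span_eq_card hindep]
    simp
  have hle2 : Submodule.span ℝ ({α, β, b} : Set (Matrix (Fin 2) (Fin 2) ℂ)) ≤ su2 := by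
    rw [Submodule.span_le]
    rintro x hx
    simp only [Set.mem_insert_iff, Set.mem_singleton_iff] at hx
    rcases hx with rfl | rfl | rfl
    · exact hα
    · exact hβ
    · exact hb
  have hfrle : Module.finrank ℝ su2 ≤ 3 := by
    refine le_trans (Submodule.finrank_mono hE) ?_
    simpa only [Set.finrank, Fintype.card_fin] using finrank_range_le_card (R := ℝ) ![(!![I, 0; 0, -I] : Matrix (Fin 2) (Fin 2) ℂ),
      !![0, 1; -1, 0], !![0, I; I, 0]]
  exact Submodule.eq_of_le_of_finrank_le hle2 (by rw [hfr3]; exact hfrle)
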